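/- arXiv:2301.09519 — 2 statements merged into one kernel-verified Lean document; each statement's English description precedes it below -/
import Mathlib

section
/- Let A ∈ ℝ^{n×n}, B ∈ ℝ^{n×p}, C ∈ ℝ^{m×n}, let s ≥ 1, k ≥ 1, l ≥ 0 be integers, let κ > 0, and let α = (α_1, …, α_s) with α_j ∈ ℝ^{m×m}. Suppose that ‖Q_s^⊤ v‖ ≥ (1/κ)‖v‖ for every v ∈ ℝ^n, where Q_s is the order-s controllability matrix. Then H_{α,l} ≤ κ² · s · G_{α, l+s}, i.e. Σ_{i=0}^{l} ‖F_{α,k}(A) A^i‖_F² ≤ κ² s · Σ_{i=0}^{l+s} ‖F_{α,k}(A) A^i B‖_F². -/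
/-- Euclidean norm of a real vector. -/
noncomputable def enormR {ι : Type*} [Fintype ι] (v : ι → ℝ) : ℝ :=
  Real.sqrt (∑ i, (v i) ^ 2)

/-- Frobenius norm of a real matrix. -/
noncomputable def frobR {ι κ : Type*} [Fintype ι] [Fintype κ] (M : Matrix ι κ ℝ) : ℝ :=
  Real.sqrt (∑ i, ∑ j, (M i j) ^ 2)

/-- The order-`s` controllability matrix `Q_s = [B, AB, A²B, …, A^{s−1}B]` (column blocks indexed
by `Fin s`). -/
def ctrlMatR (n p s : ℕ) (A : Matrix (Fin n) (Fin n) ℝ)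
    (B : Matrix (Fin n) (Fin p) ℝ) : Matrix (Fin n) (Fin s × Fin p) ℝ :=
  fun j ic => (A ^ (ic.1 : ℕ) * B) j ic.2

/-- The matrix polynomial `F_{α,k}(A) = C A^{s+k} − α₁ C A^{s−1} − α₂ C A^{s−2} − ⋯ − α_s C`. -/
def Fmat {m n : ℕ} (C : Matrix (Fin m) (Fin n) ℝ) (A : Matrix (Fin n) (Fin n) ℝ)
    (α : ℕ → Matrix (Fin m) (Fin m) ℝ) (s k : ℕ) : Matrix (Fin m) (Fin n) ℝ :=
  C * A ^ (s + k) - ∑ j ∈ Finset.Icc 1 s, α j * C * A ^ (s - j)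

lemma enormR_sq {ι : Type*} [Fintype ι] (v : ι → ℝ) :
    enormR v ^ 2 = ∑ i, (v i) ^ 2 := by
  rw [enormR, Real.sq_sqrt (by positivity)]

lemma frobR_sq {ι κ : Type*} [Fintype ι] [Fintype κ] (M : Matrix ι κ ℝ) :
    frobR M ^ 2 = ∑ i, ∑ j, (M i j) ^ 2 := by
  rw [frobR, Real.sq_sqrt (by positivity)]

lemma enormR_nonneg {ι : Type*} [Fintype ι] (v : ι → ℝ) : 0 ≤ enormR v :=
  Real.sqrt_nonneg _

/-- (Potential without `B`.)  If the smallest singular value of `Q_sᵀ` is at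
least `1/κ` (i.e. `‖Q_sᵀ v‖ ≥ (1/κ) ‖v‖` for all `v ∈ ℝ^n`), then
`H_{α,l} = ∑_{i=0}^{l} ‖F_{α,k}(A) A^i‖_F² ≤ κ² s ∑_{i=0}^{l+s} ‖F_{α,k}(A) A^i B‖_F²
= κ² s G_{α,l+s}`. -/
theorem potential_without_B (n p m : ℕ)
    (A : Matrix (Fin n) (Fin n) ℝ) (B : Matrix (Fin n) (Fin p) ℝ)
    (C : Matrix (Fin m) (Fin n) ℝ)
    (s k l : ℕ) (hs : 1 ≤ s) (hk : 1 ≤ k) (κ : ℝ) (hκ : 0 < κ)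
    (hmin : ∀ v : Fin n → ℝ,
      (1 / κ) * enormR v ≤ enormR ((ctrlMatR n p s A B).transpose.mulVec v))
    (α : ℕ → Matrix (Fin m) (Fin m) ℝ) :
    ∑ i ∈ Finset.range (l + 1), frobR (Fmat C A α s k * A ^ i) ^ 2 ≤
      κ ^ 2 * s * ∑ i ∈ Finset.range (l + s + 1), frobR (Fmat C A α s k * A ^ i * B) ^ 2 := by
  set F := Fmat C A α s k with hF
  set Q := ctrlMatR n p s A B with hQ
  set g : ℕ → ℝ := fun i => frobR (F * A ^ i * B) ^ 2 with hg
  have hgnn : ∀ i, 0 ≤ g i := fun i => sq_nonneg _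
  -- key per-matrix bound
  have key : ∀ (M : Matrix (Fin m) (Fin n) ℝ),
      frobR M ^ 2 ≤ κ ^ 2 * ∑ c : Fin s, frobR (M * (A ^ (c : ℕ) * B)) ^ 2 := by
    intro M
    have hrow : ∀ r, ∑ j, (M r j) ^ 2 ≤
        κ ^ 2 * ∑ c : Fin s × Fin p, ((M * Q) r c) ^ 2 := by
      intro r
      have h := hmin (M r)
      have h' : enormR (M r) ≤ κ * enormR (Q.transpose.mulVec (M r)) := by
        rw [one_div, inv_mul_le_iff₀ hκ] at h
        exact h
      have hsq := pow_le_pow_left₀ (enormR_nonneg (M r)) h' 2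
      rw [mul_pow, enormR_sq, enormR_sq] at hsq
      have heq : ∀ c : Fin s × Fin p,
          Q.transpose.mulVec (M r) c = (M * Q) r c := by
        intro c
        simp [Matrix.mulVec, Matrix.mul_apply, dotProduct, mul_comm]
      calc ∑ j, (M r j) ^ 2 ≤ κ ^ 2 * ∑ c, (Q.transpose.mulVec (M r) c) ^ 2 := hsq
        _ = κ ^ 2 * ∑ c, ((M * Q) r c) ^ 2 := by rw [Finset.sum_congr rfl fun c _ => by rw [heq]]
    have hMQ : ∀ r (c : Fin s × Fin p), (M * Q) r c = (M * (A ^ (c.1 : ℕ) * B)) r c.2 := by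
      intro r c
      simp [Matrix.mul_apply, hQ, ctrlMatR]
    calc frobR M ^ 2 = ∑ r, ∑ j, (M r j) ^ 2 := frobR_sq M
      _ ≤ ∑ r, κ ^ 2 * ∑ c : Fin s × Fin p, ((M * Q) r c) ^ 2 :=
          Finset.sum_le_sum fun r _ => hrow r
      _ = κ ^ 2 * ∑ c : Fin s, ∑ r, ∑ j, ((M * (A ^ (c : ℕ) * B)) r j) ^ 2 := by
          rw [← Finset.mul_sum]
          congr 1
          rw [Finset.sum_comm]
          rw [Fintype.sum_prod_type]
          exact Finset.sum_congr rfl fun c _ => by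
            rw [Finset.sum_comm]
            exact Finset.sum_congr rfl fun r _ =>
              Finset.sum_congr rfl fun j _ => by rw [hMQ r (c, j)]
      _ = κ ^ 2 * ∑ c : Fin s, frobR (M * (A ^ (c : ℕ) * B)) ^ 2 := by
          congr 1
          exact Finset.sum_congr rfl fun c _ => (frobR_sq _).symm
  -- rewrite key for M = F * A ^ i
  have key2 : ∀ i, frobR (F * A ^ i) ^ 2 ≤ κ ^ 2 * ∑ c : Fin s, g (i + (c : ℕ)) := by
    intro i
    have h := key (F * A ^ i)
    have heq : ∀ c : Fin s, F * A ^ i * (A ^ (c : ℕ) * B) = F * A ^ (i + (c : ℕ)) * B := by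
      intro c
      rw [pow_add, ← Matrix.mul_assoc, ← Matrix.mul_assoc]
    calc frobR (F * A ^ i) ^ 2
        ≤ κ ^ 2 * ∑ c : Fin s, frobR (F * A ^ i * (A ^ (c : ℕ) * B)) ^ 2 := h
      _ = κ ^ 2 * ∑ c : Fin s, g (i + (c : ℕ)) := by
          congr 1
          exact Finset.sum_congr rfl fun c _ => by rw [heq c]
  -- counting argument
  have count : ∀ c : Fin s, ∑ i ∈ Finset.range (l + 1), g (i + (c : ℕ)) ≤
      ∑ j ∈ Finset.range (l + s + 1), g j := by
    intro c
    have hshift : ∑ i ∈ Finset.range (l + 1), g (i + (c : ℕ)) =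
        ∑ j ∈ Finset.Ico (c : ℕ) (l + 1 + (c : ℕ)), g j := by
      rw [Finset.sum_Ico_eq_sum_range]
      simp [add_comm, Nat.add_sub_cancel]
    rw [hshift]
    apply Finset.sum_le_sum_of_subset_of_nonneg
    · intro j hj
      simp only [Finset.mem_Ico] at hj
      simp only [Finset.mem_range]
      have := c.isLt
      omega
    · intro j _ _; exact hgnn j
  calc ∑ i ∈ Finset.range (l + 1), frobR (F * A ^ i) ^ 2
      ≤ ∑ i ∈ Finset.range (l + 1), κ ^ 2 * ∑ c : Fin s, g (i + (c : ℕ)) :=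
        Finset.sum_le_sum fun i _ => key2 i
    _ = κ ^ 2 * ∑ c : Fin s, ∑ i ∈ Finset.range (l + 1), g (i + (c : ℕ)) := by
        rw [← Finset.mul_sum, Finset.sum_comm]
    _ ≤ κ ^ 2 * ∑ c : Fin s, ∑ j ∈ Finset.range (l + s + 1), g j := by
        apply mul_le_mul_of_nonneg_left _ (sq_nonneg κ)
        exact Finset.sum_le_sum fun c _ => count c
    _ = κ ^ 2 * s * ∑ j ∈ Finset.range (l + s + 1), g j := by
        rw [Finset.sum_const, Finset.card_univ, Fintype.card_fin, nsmul_eq_mul, mul_assoc]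
end

section
/- Consider a linear dynamical system with x_0 = 0 and D = 0, i.e. x_{t+1} = A x_t + B u_t + w_t and y_t = C x_t + z_t, where the random vectors (u_t)_{t≥0}, (w_t)_{t≥0}, (z_t)_{t≥0} are mutually independent, all have mean zero and finite second moments, E[u_t u_t^⊤] = I_p, E[z_t z_t^⊤] = I_m, and E[w_t w_t^⊤] = Σ_w for every t. Then for all integers t₁ ≥ t₂ ≥ 0, E[y_{t₁} y_{t₂}^⊤] = Σ_{i=1}^{t₂} ( C A^{t₁−t₂+i−1} B (C A^{i−1} B)^⊤ + C A^{t₁−t₂+i−1} Σ_w (C A^{i−1})^⊤ ) + 1_{t₁=t₂} · I_m. -/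
/-!
With `e t = B u t + w t` the state is `x t = ∑_{j<t} A^(t-1-j) e j`, so `y t` is a finite linear
combination of noise vectors. Independence and zero means make the `e j` pairwise uncorrelated
with second moment `B Bᵀ + Σ_w` and uncorrelated with every `z k`. Expanding `E[y t₁ (y t₂)ᵀ]`
bilinearly, only the diagonal terms `j = k < t₂` survive, together with `E[z t₁ (z t₂)ᵀ]`; the
substitution `i = t₂ - j` gives the stated indexing.
-/

open MeasureTheory ProbabilityTheory
open scoped ProbabilityTheory

/-- Embedding of `ℝ^d` into `ℕ → ℝ` (by zero padding), used to state mutual independence of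
random vectors of different dimensions as independence of a single family. -/
def embedVec (d : ℕ) (v : Fin d → ℝ) : ℕ → ℝ :=
  fun i => if h : i < d then v ⟨i, h⟩ else 0

open Matrix Finset

section CrossMoment

variable {Ω ι κ : Type*} [MeasurableSpace Ω] {μ : Measure Ω}

variable (μ) in
noncomputable def crossMoment (X : Ω → ι → ℝ) (Y : Ω → κ → ℝ) : Matrix ι κ ℝ :=
  Matrix.of fun a b => ∫ ω, X ω a * Y ω b ∂μ

lemma transpose_crossMoment (X : Ω → ι → ℝ) (Y : Ω → κ → ℝ) :
    (crossMoment μ X Y)ᵀ = crossMoment μ Y X := by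
  ext a b
  simp only [crossMoment, transpose_apply, of_apply, mul_comm]

variable [Fintype ι] [Fintype κ]

lemma MeasureTheory.MemLp.mulVec {p : ENNReal} {X : Ω → ι → ℝ} (hX : MemLp X p μ)
    (M : Matrix κ ι ℝ) :
    MemLp (fun ω => M *ᵥ X ω) p μ :=
  (LinearMap.toContinuousLinearMap (Matrix.mulVecLin M)).comp_memLp' hX

lemma integrable_apply_mul_apply {X : Ω → ι → ℝ} {Y : Ω → κ → ℝ} (hX : MemLp X 2 μ)
    (hY : MemLp Y 2 μ) (a : ι) (b : κ) : Integrable (fun ω => X ω a * Y ω b) μ :=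
  (hX.eval a).integrable_mul (hY.eval b)

lemma crossMoment_add_left {X X' : Ω → ι → ℝ} {Y : Ω → κ → ℝ} (hX : MemLp X 2 μ)
    (hX' : MemLp X' 2 μ) (hY : MemLp Y 2 μ) :
    crossMoment μ (fun ω => X ω + X' ω) Y = crossMoment μ X Y + crossMoment μ X' Y := by
  ext a b
  simp only [crossMoment, Pi.add_apply, add_mul, of_apply, Matrix.add_apply]
  exact integral_add (integrable_apply_mul_apply hX hY a b)
    (integrable_apply_mul_apply hX' hY a b)

lemma crossMoment_add_right {X : Ω → ι → ℝ} {Y Y' : Ω → κ → ℝ} (hX : MemLp X 2 μ)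
    (hY : MemLp Y 2 μ) (hY' : MemLp Y' 2 μ) :
    crossMoment μ X (fun ω => Y ω + Y' ω) = crossMoment μ X Y + crossMoment μ X Y' := by
  rw [← transpose_crossMoment, crossMoment_add_left hY hY' hX, transpose_add,
    transpose_crossMoment, transpose_crossMoment]

lemma crossMoment_sum_left {τ : Type*} {s : Finset τ} {X : τ → Ω → ι → ℝ} {Y : Ω → κ → ℝ}
    (hX : ∀ j ∈ s, MemLp (X j) 2 μ) (hY : MemLp Y 2 μ) :
    crossMoment μ (fun ω => ∑ j ∈ s, X j ω) Y = ∑ j ∈ s, crossMoment μ (X j) Y := by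
  ext a b
  simp only [crossMoment, Finset.sum_apply, Finset.sum_mul, of_apply, Matrix.sum_apply]
  exact integral_finsetSum s fun j hj => integrable_apply_mul_apply (hX j hj) hY a b

lemma crossMoment_sum_right {τ : Type*} {s : Finset τ} {X : Ω → ι → ℝ} {Y : τ → Ω → κ → ℝ}
    (hX : MemLp X 2 μ) (hY : ∀ k ∈ s, MemLp (Y k) 2 μ) :
    crossMoment μ X (fun ω => ∑ k ∈ s, Y k ω) = ∑ k ∈ s, crossMoment μ X (Y k) := by
  rw [← transpose_crossMoment, crossMoment_sum_left hY hX, transpose_sum]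
  simp only [transpose_crossMoment]

lemma crossMoment_mulVec_left {κ' : Type*} {X : Ω → ι → ℝ} {Y : Ω → κ → ℝ} (hX : MemLp X 2 μ)
    (hY : MemLp Y 2 μ) (M : Matrix κ' ι ℝ) :
    crossMoment μ (fun ω => M *ᵥ X ω) Y = M * crossMoment μ X Y := by
  ext a b
  simp only [crossMoment, mulVec, dotProduct, Finset.sum_mul, of_apply, mul_apply, mul_assoc]
  rw [integral_finsetSum _ fun c _ => (integrable_apply_mul_apply hX hY c b).const_mul _]
  simp only [integral_const_mul]

lemma crossMoment_mulVec_right {κ' : Type*} {X : Ω → ι → ℝ} {Y : Ω → κ → ℝ} (hX : MemLp X 2 μ)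
    (hY : MemLp Y 2 μ) (N : Matrix κ' κ ℝ) :
    crossMoment μ X (fun ω => N *ᵥ Y ω) = crossMoment μ X Y * Nᵀ := by
  rw [← transpose_crossMoment, crossMoment_mulVec_left hY hX, transpose_mul,
    transpose_crossMoment]

end CrossMoment

section Independence

variable {Ω ι : Type*} [MeasurableSpace Ω] {μ : Measure Ω} [Fintype ι]

lemma ProbabilityTheory.IndepFun.of_comp_embedVec {d d' : ℕ} {X : Ω → Fin d → ℝ}
    {Y : Ω → Fin d' → ℝ}
    (h : IndepFun (fun ω => embedVec d (X ω)) (fun ω => embedVec d' (Y ω)) μ) :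
    IndepFun X Y μ := by
  have hrestrict (k : ℕ) : Measurable fun v : ℕ → ℝ => fun a : Fin k => v a :=
    measurable_pi_lambda _ fun a => measurable_pi_apply _
  simpa [Function.comp_def, embedVec] using h.comp (hrestrict d) (hrestrict d')

lemma crossMoment_eq_zero_of_indepFun {κ : Type*} [Fintype κ] {X : Ω → ι → ℝ} {Y : Ω → κ → ℝ}
    (hXY : IndepFun X Y μ) (hX : MemLp X 2 μ) (hY : MemLp Y 2 μ)
    (hX0 : ∀ a, ∫ ω, X ω a ∂μ = 0) : crossMoment μ X Y = 0 := by
  ext a b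
  have hab : IndepFun (fun ω => X ω a) (fun ω => Y ω b) μ :=
    hXY.comp (measurable_pi_apply a) (measurable_pi_apply b)
  simp [crossMoment, hab.integral_fun_mul_eq_mul_integral (hX.eval a).aestronglyMeasurable
    (hY.eval b).aestronglyMeasurable, hX0]

lemma crossMoment_eq_ite_of_pairwise_indepFun {τ : Type*} [DecidableEq τ] {v : τ → Ω → ι → ℝ}
    {S : Matrix ι ι ℝ} (hind : Pairwise fun j k => IndepFun (v j) (v k) μ)
    (hv : ∀ j, MemLp (v j) 2 μ) (hmean : ∀ j a, ∫ ω, v j ω a ∂μ = 0)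
    (hS : ∀ j, crossMoment μ (v j) (v j) = S) (j k : τ) :
    crossMoment μ (v j) (v k) = if j = k then S else 0 := by
  split_ifs with h
  · exact h ▸ hS j
  · exact crossMoment_eq_zero_of_indepFun (hind h) (hv j) (hv k) (hmean j)

end Independence

section WhiteNoise

variable {Ω ι κ κ' τ : Type*} [MeasurableSpace Ω] {μ : Measure Ω} [Fintype ι] [Fintype κ]
  [Fintype κ'] [DecidableEq τ]

lemma crossMoment_sum_mulVec_of_white {v : τ → Ω → ι → ℝ} {S : Matrix ι ι ℝ}
    (hv : ∀ j, MemLp (v j) 2 μ) (hcov : ∀ j k, crossMoment μ (v j) (v k) = if j = k then S else 0)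
    (M : τ → Matrix κ ι ℝ) (N : τ → Matrix κ' ι ℝ) (s t : Finset τ) :
    crossMoment μ (fun ω => ∑ j ∈ s, M j *ᵥ v j ω) (fun ω => ∑ k ∈ t, N k *ᵥ v k ω)
      = ∑ j ∈ s ∩ t, M j * S * (N j)ᵀ := by
  have hMv : ∀ j, MemLp (fun ω => M j *ᵥ v j ω) 2 μ := fun j => (hv j).mulVec (M j)
  have hNv : ∀ k, MemLp (fun ω => N k *ᵥ v k ω) 2 μ := fun k => (hv k).mulVec (N k)
  have hsum : MemLp (fun ω => ∑ k ∈ t, N k *ᵥ v k ω) 2 μ := memLp_finsetSum t fun k _ => hNv k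
  rw [crossMoment_sum_left (fun j _ => hMv j) hsum]
  simp_rw [crossMoment_sum_right (hMv _) fun k _ => hNv k,
    crossMoment_mulVec_left (hv _) (hNv _), crossMoment_mulVec_right (hv _) (hv _), hcov]
  have hdiag (j k : τ) : M j * ((if j = k then S else 0) * (N k)ᵀ)
      = if j = k then M j * S * (N j)ᵀ else 0 := by
    split_ifs with h <;> simp [h, Matrix.mul_assoc]
  simp only [hdiag, Finset.sum_ite_eq, Finset.sum_ite_mem]

lemma crossMoment_mulVec_add_left {X : Ω → ι → ℝ} {X' : Ω → κ → ℝ}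
    {Y : Ω → κ' → ℝ} (hX : MemLp X 2 μ) (hX' : MemLp X' 2 μ) (hY : MemLp Y 2 μ)
    (B : Matrix κ ι ℝ) :
    crossMoment μ (fun ω => B *ᵥ X ω + X' ω) Y = B * crossMoment μ X Y + crossMoment μ X' Y := by
  rw [crossMoment_add_left (hX.mulVec B) hX' hY, crossMoment_mulVec_left hX hY]

lemma crossMoment_mulVec_add_of_white {u : τ → Ω → ι → ℝ} {w : τ → Ω → κ → ℝ}
    {Su : Matrix ι ι ℝ} {Sw : Matrix κ κ ℝ} (hu : ∀ j, MemLp (u j) 2 μ)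
    (hw : ∀ j, MemLp (w j) 2 μ) (huu : ∀ j k, crossMoment μ (u j) (u k) = if j = k then Su else 0)
    (hww : ∀ j k, crossMoment μ (w j) (w k) = if j = k then Sw else 0)
    (huw : ∀ j k, crossMoment μ (u j) (w k) = 0) (B : Matrix κ ι ℝ) (j k : τ) :
    crossMoment μ (fun ω => B *ᵥ u j ω + w j ω) (fun ω => B *ᵥ u k ω + w k ω)
      = if j = k then B * Su * Bᵀ + Sw else 0 := by
  have hwu : crossMoment μ (w j) (u k) = 0 := by
    rw [← transpose_crossMoment, huw, transpose_zero]
  rw [crossMoment_mulVec_add_left (hu j) (hw j) ?_,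
    crossMoment_add_right (hu j) ((hu k).mulVec B) (hw k),
    crossMoment_add_right (hw j) ((hu k).mulVec B) (hw k), crossMoment_mulVec_right (hu j) (hu k),
    crossMoment_mulVec_right (hw j) (hu k), huu, hww, huw, hwu]
  · split_ifs <;> simp [Matrix.mul_assoc]
  · exact ((hu k).mulVec B).add (hw k)

end WhiteNoise

section LinearSystem

variable {Ω ι : Type*} [Fintype ι] [DecidableEq ι] {A : Matrix ι ι ℝ} {x e : ℕ → Ω → ι → ℝ}

lemma state_eq_sum (hx0 : ∀ ω, x 0 ω = 0) (hx : ∀ t ω, x (t + 1) ω = A *ᵥ x t ω + e t ω)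
    (t : ℕ) (ω : Ω) : x t ω = ∑ j ∈ range t, A ^ (t - 1 - j) *ᵥ e j ω := by
  induction t with
  | zero => simp [hx0]
  | succ t ih =>
    rw [hx, ih, Finset.sum_range_succ, mulVec_sum, Nat.add_sub_cancel, Nat.sub_self, pow_zero,
      one_mulVec]
    congr 1
    refine Finset.sum_congr rfl fun j hj => ?_
    rw [mulVec_mulVec, ← pow_succ', Nat.sub_right_comm, Nat.sub_add_cancel]
    have := Finset.mem_range.1 hj
    omega

lemma crossMoment_output_of_white [MeasurableSpace Ω] {μ : Measure Ω} {κ : Type*} [Fintype κ]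
    {C : Matrix κ ι ℝ} {z y : ℕ → Ω → κ → ℝ} {Q : Matrix ι ι ℝ}
    {R : Matrix κ κ ℝ} (hx0 : ∀ ω, x 0 ω = 0) (hx : ∀ t ω, x (t + 1) ω = A *ᵥ x t ω + e t ω)
    (hy : ∀ t ω, y t ω = C *ᵥ x t ω + z t ω) (he : ∀ j, MemLp (e j) 2 μ)
    (hz : ∀ j, MemLp (z j) 2 μ) (hee : ∀ j k, crossMoment μ (e j) (e k) = if j = k then Q else 0)
    (hzz : ∀ j k, crossMoment μ (z j) (z k) = if j = k then R else 0)
    (hez : ∀ j k, crossMoment μ (e j) (z k) = 0) {t₁ t₂ : ℕ} (ht : t₂ ≤ t₁) :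
    crossMoment μ (y t₁) (y t₂)
      = ∑ j ∈ range t₂, (C * A ^ (t₁ - 1 - j)) * Q * (C * A ^ (t₂ - 1 - j))ᵀ
        + if t₁ = t₂ then R else 0 := by
  set V : ℕ → Ω → κ → ℝ := fun t ω => ∑ j ∈ range t, (C * A ^ (t - 1 - j)) *ᵥ e j ω
  have hyV (t : ℕ) : y t = fun ω => V t ω + z t ω := by
    ext1 ω
    simp only [V, hy, state_eq_sum hx0 hx, mulVec_sum, mulVec_mulVec]
  have hV (t : ℕ) : MemLp (V t) 2 μ := memLp_finsetSum _ fun j _ => (he j).mulVec _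
  have hVz (t k : ℕ) : crossMoment μ (V t) (z k) = 0 := by
    simp only [V]
    rw [crossMoment_sum_left (fun j _ => (he j).mulVec _) (hz k)]
    simp [crossMoment_mulVec_left (he _) (hz k), hez]
  rw [hyV, hyV, crossMoment_add_left (hV t₁) (hz t₁) ?_,
    crossMoment_add_right (hV t₁) (hV t₂) (hz t₂), crossMoment_add_right (hz t₁) (hV t₂) (hz t₂),
    crossMoment_sum_mulVec_of_white he hee, hVz, ← transpose_crossMoment (V t₂) (z t₁), hVz, hzz,
    Finset.range_inter_range, min_eq_right ht]
  · simp
  · exact (hV t₂).add (hz t₂)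

end LinearSystem

lemma sum_range_reflect_eq_sum_Icc {M : Type*} [AddCommMonoid M] (f : ℕ → ℕ → M) {t₁ t₂ : ℕ}
    (ht : t₂ ≤ t₁) :
    ∑ j ∈ range t₂, f (t₁ - 1 - j) (t₂ - 1 - j)
      = ∑ i ∈ Icc 1 t₂, f (t₁ - t₂ + i - 1) (i - 1) := by
  refine Finset.sum_nbij' (t₂ - ·) (t₂ - ·) ?_ ?_ ?_ ?_ ?_ <;>
    intro j hj <;> simp only [Finset.mem_range, Finset.mem_Icc] at hj ⊢
  · omega
  · omega
  · omega
  · omega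
  · congr 1 <;> omega

theorem observation_covariance_formula_general
    {Ω : Type*} [MeasureSpace Ω] [IsProbabilityMeasure (ℙ : Measure Ω)]
    (n p m : ℕ)
    (A : Matrix (Fin n) (Fin n) ℝ) (B : Matrix (Fin n) (Fin p) ℝ)
    (C : Matrix (Fin m) (Fin n) ℝ) (Sw : Matrix (Fin n) (Fin n) ℝ)
    (x : ℕ → Ω → Fin n → ℝ) (u : ℕ → Ω → Fin p → ℝ) (w : ℕ → Ω → Fin n → ℝ)
    (z : ℕ → Ω → Fin m → ℝ) (y : ℕ → Ω → Fin m → ℝ)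
    (hx0 : ∀ ω : Ω, x 0 ω = 0)
    (hx : ∀ (t : ℕ) (ω : Ω), x (t + 1) ω = A.mulVec (x t ω) + B.mulVec (u t ω) + w t ω)
    (hy : ∀ (t : ℕ) (ω : Ω), y t ω = C.mulVec (x t ω) + z t ω)
    -- mutual independence of all the `u t`, `w t`, `z t`
    (hindep : iIndepFun
      (fun idx : ℕ × Fin 3 =>
        if idx.2 = 0 then fun ω => embedVec p (u idx.1 ω)
        else if idx.2 = 1 then fun ω => embedVec n (w idx.1 ω)
        else fun ω => embedVec m (z idx.1 ω)) ℙ)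
    -- mean zero
    (humean : ∀ t a, ∫ ω, u t ω a = 0)
    (hwmean : ∀ t a, ∫ ω, w t ω a = 0)
    (hzmean : ∀ t a, ∫ ω, z t ω a = 0)
    -- finite second moments
    (humom : ∀ t a, MemLp (fun ω => u t ω a) 2 ℙ)
    (hwmom : ∀ t a, MemLp (fun ω => w t ω a) 2 ℙ)
    (hzmom : ∀ t a, MemLp (fun ω => z t ω a) 2 ℙ)
    -- covariances
    (hucov : ∀ t (a b : Fin p), ∫ ω, u t ω a * u t ω b = if a = b then 1 else 0)
    (hzcov : ∀ t (a b : Fin m), ∫ ω, z t ω a * z t ω b = if a = b then 1 else 0)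
    (hwcov : ∀ t (a b : Fin n), ∫ ω, w t ω a * w t ω b = Sw a b)
    (t₁ t₂ : ℕ) (ht : t₂ ≤ t₁) :
    (Matrix.of fun a b : Fin m => ∫ ω, y t₁ ω a * y t₂ ω b)
      = ∑ i ∈ Finset.Icc 1 t₂,
          (C * A ^ (t₁ - t₂ + i - 1) * B * (C * A ^ (i - 1) * B).transpose
            + C * A ^ (t₁ - t₂ + i - 1) * Sw * (C * A ^ (i - 1)).transpose)
        + (if t₁ = t₂ then (1 : Matrix (Fin m) (Fin m) ℝ) else 0) := by
  have hu (t : ℕ) : MemLp (u t) 2 ℙ := MemLp.of_eval (humom t)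
  have hw (t : ℕ) : MemLp (w t) 2 ℙ := MemLp.of_eval (hwmom t)
  have hz (t : ℕ) : MemLp (z t) 2 ℙ := MemLp.of_eval (hzmom t)
  have huu := crossMoment_eq_ite_of_pairwise_indepFun (fun j k h =>
    (hindep.indepFun (i := (j, 0)) (j := (k, 0)) (by simpa using h)).of_comp_embedVec) hu humean
    fun t => (by ext a b; exact hucov t a b : crossMoment ℙ (u t) (u t) = 1)
  have hww := crossMoment_eq_ite_of_pairwise_indepFun (fun j k h =>
    (hindep.indepFun (i := (j, 1)) (j := (k, 1)) (by simpa using h)).of_comp_embedVec) hw hwmean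
    fun t => (by ext a b; exact hwcov t a b : crossMoment ℙ (w t) (w t) = Sw)
  have hzz := crossMoment_eq_ite_of_pairwise_indepFun (fun j k h =>
    (hindep.indepFun (i := (j, 2)) (j := (k, 2)) (by simpa using h)).of_comp_embedVec) hz hzmean
    fun t => (by ext a b; exact hzcov t a b : crossMoment ℙ (z t) (z t) = 1)
  have huw (j k : ℕ) : crossMoment ℙ (u j) (w k) = 0 := crossMoment_eq_zero_of_indepFun
    (hindep.indepFun (i := (j, 0)) (j := (k, 1)) (by simp)).of_comp_embedVec
      (hu j) (hw k) (humean j)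
  have huz (j k : ℕ) : crossMoment ℙ (u j) (z k) = 0 := crossMoment_eq_zero_of_indepFun
    (hindep.indepFun (i := (j, 0)) (j := (k, 2)) (by simp)).of_comp_embedVec
      (hu j) (hz k) (humean j)
  have hwz (j k : ℕ) : crossMoment ℙ (w j) (z k) = 0 := crossMoment_eq_zero_of_indepFun
    (hindep.indepFun (i := (j, 1)) (j := (k, 2)) (by simp)).of_comp_embedVec
      (hw j) (hz k) (hwmean j)
  have hez (j k : ℕ) : crossMoment ℙ (fun ω => B *ᵥ u j ω + w j ω) (z k) = 0 := by
    rw [crossMoment_mulVec_add_left (hu j) (hw j) (hz k), huz, hwz, Matrix.mul_zero, add_zero]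
  change crossMoment ℙ (y t₁) (y t₂) = _
  rw [crossMoment_output_of_white (e := fun j ω => B *ᵥ u j ω + w j ω) hx0
    (fun t ω => by rw [hx, add_assoc]) hy (fun j => ((hu j).mulVec B).add (hw j)) hz
    (crossMoment_mulVec_add_of_white hu hw huu hww huw B) hzz hez ht,
    ← sum_range_reflect_eq_sum_Icc (fun a b => C * A ^ a * B * (C * A ^ b * B)ᵀ
      + C * A ^ a * Sw * (C * A ^ b)ᵀ) ht]
  simp [Matrix.mul_add, Matrix.add_mul, Matrix.mul_assoc, transpose_mul]

/-- (Covariance of the observations.)  For a linear dynamical system with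
`x 0 = 0` and `D = 0`, i.e. `x (t+1) = A x t + B u t + w t`, `y t = C x t + z t`, where the
`u`'s, `w`'s, `z`'s are mutually independent, mean-zero, with finite second moments,
`E[u_t u_tᵀ] = I_p`, `E[z_t z_tᵀ] = I_m` and `E[w_t w_tᵀ] = Σ_w`, we have for `t₁ ≥ t₂ ≥ 0`:
`E[y_{t₁} y_{t₂}ᵀ] = ∑_{i=1}^{t₂} (C A^{t₁−t₂+i−1} B (C A^{i−1} B)ᵀ
  + C A^{t₁−t₂+i−1} Σ_w (C A^{i−1})ᵀ) + 1_{t₁=t₂} I_m`. -/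
theorem observation_covariance_formula
    {Ω : Type*} [MeasureSpace Ω] [IsProbabilityMeasure (ℙ : Measure Ω)]
    (n p m : ℕ)
    (A : Matrix (Fin n) (Fin n) ℝ) (B : Matrix (Fin n) (Fin p) ℝ)
    (C : Matrix (Fin m) (Fin n) ℝ) (Sw : Matrix (Fin n) (Fin n) ℝ)
    (x : ℕ → Ω → Fin n → ℝ) (u : ℕ → Ω → Fin p → ℝ) (w : ℕ → Ω → Fin n → ℝ)
    (z : ℕ → Ω → Fin m → ℝ) (y : ℕ → Ω → Fin m → ℝ)
    (hx0 : ∀ ω : Ω, x 0 ω = 0)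
    (hx : ∀ (t : ℕ) (ω : Ω), x (t + 1) ω = A.mulVec (x t ω) + B.mulVec (u t ω) + w t ω)
    (hy : ∀ (t : ℕ) (ω : Ω), y t ω = C.mulVec (x t ω) + z t ω)
    (hmeasu : ∀ t, Measurable (u t)) (hmeasw : ∀ t, Measurable (w t))
    (hmeasz : ∀ t, Measurable (z t))
    -- mutual independence of all the `u t`, `w t`, `z t`
    (hindep : iIndepFun
      (fun idx : ℕ × Fin 3 =>
        if idx.2 = 0 then fun ω => embedVec p (u idx.1 ω)
        else if idx.2 = 1 then fun ω => embedVec n (w idx.1 ω)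
        else fun ω => embedVec m (z idx.1 ω)) ℙ)
    -- mean zero
    (humean : ∀ t a, ∫ ω, u t ω a = 0)
    (hwmean : ∀ t a, ∫ ω, w t ω a = 0)
    (hzmean : ∀ t a, ∫ ω, z t ω a = 0)
    -- finite second moments
    (humom : ∀ t a, MemLp (fun ω => u t ω a) 2 ℙ)
    (hwmom : ∀ t a, MemLp (fun ω => w t ω a) 2 ℙ)
    (hzmom : ∀ t a, MemLp (fun ω => z t ω a) 2 ℙ)
    -- covariances
    (hucov : ∀ t (a b : Fin p), ∫ ω, u t ω a * u t ω b = if a = b then 1 else 0)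
    (hzcov : ∀ t (a b : Fin m), ∫ ω, z t ω a * z t ω b = if a = b then 1 else 0)
    (hwcov : ∀ t (a b : Fin n), ∫ ω, w t ω a * w t ω b = Sw a b)
    (t₁ t₂ : ℕ) (ht : t₂ ≤ t₁) :
    (Matrix.of fun a b : Fin m => ∫ ω, y t₁ ω a * y t₂ ω b)
      = ∑ i ∈ Finset.Icc 1 t₂,
          (C * A ^ (t₁ - t₂ + i - 1) * B * (C * A ^ (i - 1) * B).transpose
            + C * A ^ (t₁ - t₂ + i - 1) * Sw * (C * A ^ (i - 1)).transpose)
        + (if t₁ = t₂ then (1 : Matrix (Fin m) (Fin m) ℝ) else 0) :=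
  observation_covariance_formula_general n p m A B C Sw x u w z y hx0 hx hy hindep humean hwmean
    hzmean humom hwmom hzmom hucov hzcov hwcov t₁ t₂ ht
end
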